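/- A Hausdorff topological space possesses a locally strict Sorgenfrey base with strict branches if and only if it is homeomorphic to the Sorgenfrey line. In particular, the Sorgenfrey line is, up to homeomorphism, the unique Hausdorff space having a locally strict Sorgenfrey base with strict branches. -/

import Mathlib

open Set Filter Topology TopologicalSpace Function

noncomputable section

/-- The Sorgenfrey topology on `ℝ`: generated by half-open intervals `[a, b)`. -/
def sorgenfreyTop : TopologicalSpace ℝ :=
  TopologicalSpace.generateFrom {s : Set ℝ | ∃ a b : ℝ, s = Set.Ico a b}

/-- The initial segment `p↾n` of an infinite sequence, as a list. -/
def restr (p : ℕ → ℕ) (n : ℕ) : List ℕ := (List.range n).map p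

/-- `fruit V p = ⋂ n, V (p↾n)`. -/
def fruit {X : Type*} (V : List ℕ → Set X) (p : ℕ → ℕ) : Set X := ⋂ n, V (restr p n)

/-- A Souslin scheme is covering if `V ⟨⟩ = X` and `V a = ⋃ n, V (a ⌢ n)`. -/
def Covering {X : Type*} (V : List ℕ → Set X) : Prop :=
  V [] = Set.univ ∧ ∀ a : List ℕ, V a = ⋃ n : ℕ, V (a ++ [n])

/-- A Souslin scheme is complete if every fruit is nonempty. -/
def CompleteScheme {X : Type*} (V : List ℕ → Set X) : Prop :=
  ∀ q : ℕ → ℕ, (fruit V q).Nonempty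

/-- A Souslin scheme has strict branches if every fruit is a singleton. -/
def StrictBranches {X : Type*} (V : List ℕ → Set X) : Prop :=
  ∀ q : ℕ → ℕ, ∃ x : X, fruit V q = {x}

/-- A Souslin scheme is locally strict. -/
def LocallyStrict {X : Type*} (V : List ℕ → Set X) : Prop :=
  (∀ a : List ℕ, V a = ⋃ n : ℕ, V (a ++ [n])) ∧
  ∀ a : List ℕ, ∀ m k : ℕ, m ≠ k → V (a ++ [m]) ∩ V (a ++ [k]) = ∅

/-- `q ◁ p` for infinite sequences: `q↾n = p↾n` and `q n < p n` for some `n`. -/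
def tri (q p : ℕ → ℕ) : Prop := ∃ n : ℕ, restr q n = restr p n ∧ q n < p n

/-- `q ⊴ p` for infinite sequences. -/
def trieq (q p : ℕ → ℕ) : Prop := tri q p ∨ q = p

/-- `q ◁ s` where `q` is an infinite sequence and `s` a finite one. -/
def triL (q : ℕ → ℕ) (s : List ℕ) : Prop :=
  ∃ n : ℕ, ∃ h : n < s.length, restr q n = s.take n ∧ q n < s.get ⟨n, h⟩

/-- `rsequences(q, n) = {p | q ◁ p ∧ q↾n = p↾n}`. -/
def rsequences (q : ℕ → ℕ) (n : ℕ) : Set (ℕ → ℕ) :=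
  {p | tri q p ∧ restr q n = restr p n}

/-- `rsubtree(q, n)`: finite sequences `s` such that `q↾n ⊏ s` and `q ◁ s`. -/
def rsubtree (q : ℕ → ℕ) (n : ℕ) : Set (List ℕ) :=
  {s | restr q n <+: s ∧ restr q n ≠ s ∧ triL q s}

/-- `cut(V, q, n) = ⋃ {fruit(V, p) : p ∈ rsequences(q, n)}`. -/
def cut {X : Type*} (V : List ℕ → Set X) (q : ℕ → ℕ) (n : ℕ) : Set X :=
  ⋃ p ∈ rsequences q n, fruit V p

/-- `branches(V, x) = {q | x ∈ fruit(V, q)}`. -/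
def branches {X : Type*} (V : List ℕ → Set X) (x : X) : Set (ℕ → ℕ) :=
  {q | x ∈ fruit V q}

/-- `q` is a `τ`-base branch of `x` in `V`: `q ∈ branches(V, x)` and
`{cut(V, q, m) ∪ {x} : m ∈ ℕ}` is a neighborhood base of open sets at `x`. -/
def IsBaseBranch {X : Type*} (τ : TopologicalSpace X) (V : List ℕ → Set X)
    (q : ℕ → ℕ) (x : X) : Prop :=
  x ∈ fruit V q ∧ (∀ m : ℕ, IsOpen[τ] (cut V q m ∪ {x})) ∧
    (@nhds X τ x).HasBasis (fun _ : ℕ => True) (fun m : ℕ => cut V q m ∪ {x})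

/-- `BB(V, x, τ)`: the set of `τ`-base branches of `x` in `V`. -/
def BB {X : Type*} (τ : TopologicalSpace X) (V : List ℕ → Set X) (x : X) : Set (ℕ → ℕ) :=
  {q | IsBaseBranch τ V q x}

/-- A Sorgenfrey base for a space: an open complete covering Souslin scheme
satisfying (S1) and (S2). -/
def IsSorgenfreyBase {X : Type*} (τ : TopologicalSpace X) (V : List ℕ → Set X) : Prop :=
  (∀ a : List ℕ, IsOpen[τ] (V a)) ∧ CompleteScheme V ∧ Covering V ∧
  (∀ x : X, ∀ q ∈ branches V x, ∀ n : ℕ, ∃ t ∈ BB τ V x, restr t n = restr q n) ∧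
  (∀ q : ℕ → ℕ, ∃ z : X, q ∈ BB τ V z)

/-- The Souslin scheme `S` on the Baire set: `S a = {p | a ⊑ p}`. -/
def SchemeS (a : List ℕ) : Set (ℕ → ℕ) := {p | restr p a.length = a}

/-- The topology `σ_𝕊` on `ℕ → ℕ` generated by the base
`{cut(S, p, n) ∪ {p} : p ∈ ℕ → ℕ, n ∈ ℕ}`. -/
def sigmaS : TopologicalSpace (ℕ → ℕ) :=
  TopologicalSpace.generateFrom
    {U : Set (ℕ → ℕ) | ∃ p : ℕ → ℕ, ∃ n : ℕ, U = cut SchemeS p n ∪ {p}}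

/-!
In a locally strict covering scheme with strict branches, sending `q` to the point of `fruit V q`
is a bijection between `ℕ → ℕ` and `X`. If moreover every branch of a point is a base branch, the
neighbourhoods of the point of `q` are the points of the branches that lie to the right of `q` and
agree with it on a long initial segment. Two such spaces are therefore homeomorphic by matching the
points of equal branches, and such schemes pull back along homeomorphisms. On `ℝ` one is obtained
by splitting `ℝ` into the intervals `[z, z + 1)`, `z ∈ ℤ`, and then every `[a, b)` into the pieces
`[a + (b - a)(1 - 2⁻ᵏ), a + (b - a)(1 - 2⁻ᵏ⁻¹))`: below the first digit, moving right along the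
branches moves right in `ℝ`, so the cuts are the Sorgenfrey intervals `[x, b)`.
-/

lemma restr_length (q : ℕ → ℕ) (n : ℕ) : (restr q n).length = n := by
  simp [restr]

lemma restr_succ (q : ℕ → ℕ) (n : ℕ) : restr q (n + 1) = restr q n ++ [q n] := by
  simp [restr, List.range_succ]

lemma restr_eq_restr_iff {q p : ℕ → ℕ} {n : ℕ} :
    restr q n = restr p n ↔ ∀ i < n, q i = p i := by
  simp [restr, List.map_inj_left]

lemma tri_or_tri_of_ne {q p : ℕ → ℕ} (h : q ≠ p) : tri q p ∨ tri p q := by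
  classical
  have hne : ∃ n, q n ≠ p n := Function.ne_iff.1 h
  have hr : restr q (Nat.find hne) = restr p (Nat.find hne) :=
    restr_eq_restr_iff.2 fun i hi => not_not.1 (Nat.find_min hne hi)
  rcases (Nat.find_spec hne).lt_or_gt with hlt | hgt
  · exact .inl ⟨_, hr, hlt⟩
  · exact .inr ⟨_, hr.symm, hgt⟩

section Scheme

variable {X : Type*} {V : List ℕ → Set X}

lemma fruit_subset (V : List ℕ → Set X) (q : ℕ → ℕ) (n : ℕ) : fruit V q ⊆ V (restr q n) :=
  iInter_subset _ n

lemma cut_subset (V : List ℕ → Set X) (q : ℕ → ℕ) (n : ℕ) : cut V q n ⊆ V (restr q n) :=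
  iUnion₂_subset fun _ hp => hp.2 ▸ fruit_subset V _ n

lemma fruit_preimage {Y : Type*} (f : X → Y) (U : List ℕ → Set Y) (q : ℕ → ℕ) :
    fruit (fun a => f ⁻¹' U a) q = f ⁻¹' fruit U q :=
  preimage_iInter.symm

lemma cut_preimage {Y : Type*} (f : X → Y) (U : List ℕ → Set Y) (q : ℕ → ℕ) (n : ℕ) :
    cut (fun a => f ⁻¹' U a) q n = f ⁻¹' cut U q n := by
  simp only [cut, fruit_preimage, preimage_iUnion]

lemma append_subset_of_eq_iUnion (hV : ∀ a, V a = ⋃ n, V (a ++ [n])) (a b : List ℕ) :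
    V (a ++ b) ⊆ V a := by
  induction b using List.reverseRec with
  | nil => simp
  | append_singleton b k ih =>
    rw [← List.append_assoc]
    exact (hV (a ++ b) ▸ subset_iUnion (fun n => V (a ++ b ++ [n])) k).trans ih

namespace LocallyStrict

lemma eq_of_mem (hV : LocallyStrict V) {a b : List ℕ} (hab : a.length = b.length) {x : X}
    (ha : x ∈ V a) (hb : x ∈ V b) : a = b := by
  induction a using List.reverseRec generalizing b with
  | nil => exact (List.eq_nil_of_length_eq_zero hab.symm).symm
  | append_singleton a k ih =>
    obtain ⟨b, m, rfl⟩ : ∃ b' m, b = b' ++ [m] := by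
      rcases List.eq_nil_or_concat b with rfl | h
      · simp at hab
      · simpa using h
    have hsub := append_subset_of_eq_iUnion hV.1
    obtain rfl : a = b := ih (by simpa using hab) (hsub a [k] ha) (hsub b [m] hb)
    suffices k = m by rw [this]
    by_contra hkm
    exact notMem_empty x (hV.2 a k m hkm ▸ mem_inter ha hb)

lemma restr_eq_of_mem_fruit (hV : LocallyStrict V) {a : List ℕ} {x : X} {p : ℕ → ℕ}
    (ha : x ∈ V a) (hp : x ∈ fruit V p) : restr p a.length = a :=
  hV.eq_of_mem (restr_length p _) (fruit_subset V p _ hp) ha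

lemma eq_of_mem_fruit (hV : LocallyStrict V) {x : X} {p q : ℕ → ℕ} (hp : x ∈ fruit V p)
    (hq : x ∈ fruit V q) : p = q := by
  funext n
  have h := hV.restr_eq_of_mem_fruit (fruit_subset V q (n + 1) hq) hp
  rw [restr_length] at h
  exact restr_eq_restr_iff.1 h n n.lt_succ_self

end LocallyStrict

lemma Covering.exists_mem_fruit (hV : Covering V) (x : X) : ∃ q, x ∈ fruit V q := by
  have hnext (a : {a // x ∈ V a}) : ∃ k, x ∈ V (a.1 ++ [k]) :=
    mem_iUnion.1 (hV.2 a.1 ▸ a.2)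
  choose next hnext using hnext
  let node : ℕ → {a // x ∈ V a} :=
    fun n => n.rec ⟨[], hV.1 ▸ mem_univ x⟩ fun _ a => ⟨a.1 ++ [next a], hnext a⟩
  have hnode (n : ℕ) : (node n).1 = restr (fun i => next (node i)) n := by
    induction n with
    | zero => rfl
    | succ n ih => rw [restr_succ, ← ih]
  exact ⟨fun i => next (node i), mem_iInter.2 fun n => hnode n ▸ (node n).2⟩

end Scheme

structure IsStrictScheme {X : Type*} (V : List ℕ → Set X) : Prop where
  covering : Covering V
  locallyStrict : LocallyStrict V
  strictBranches : StrictBranches V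

structure IsStrictSorgenfreyScheme {X : Type*} (τ : TopologicalSpace X) (V : List ℕ → Set X) :
    Prop extends IsStrictScheme V where
  isBaseBranch : ∀ q x, x ∈ fruit V q → IsBaseBranch τ V q x

namespace IsStrictScheme

variable {X : Type*} {V : List ℕ → Set X} (hV : IsStrictScheme V)

def equiv : (ℕ → ℕ) ≃ X where
  toFun q := (hV.strictBranches q).choose
  invFun x := (hV.covering.exists_mem_fruit x).choose
  left_inv q := hV.locallyStrict.eq_of_mem_fruit (hV.covering.exists_mem_fruit _).choose_spec
    ((hV.strictBranches q).choose_spec ▸ rfl)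
  right_inv x := by
    have hx := (hV.covering.exists_mem_fruit x).choose_spec
    rw [(hV.strictBranches _).choose_spec] at hx
    exact hx.symm

lemma fruit_eq (q : ℕ → ℕ) : fruit V q = {hV.equiv q} :=
  (hV.strictBranches q).choose_spec

lemma equiv_mem_fruit (q : ℕ → ℕ) : hV.equiv q ∈ fruit V q :=
  hV.fruit_eq q ▸ rfl

lemma cut_eq_image (q : ℕ → ℕ) (n : ℕ) : cut V q n = hV.equiv '' rsequences q n := by
  simp only [cut, hV.fruit_eq, image_eq_iUnion]

lemma cut_union_singleton_eq_image (q : ℕ → ℕ) (n : ℕ) :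
    cut V q n ∪ {hV.equiv q} = hV.equiv '' insert q (rsequences q n) := by
  rw [image_insert_eq, union_singleton, cut_eq_image]

lemma mem_iff_restr_eq {a : List ℕ} {x : X} :
    x ∈ V a ↔ restr (hV.equiv.symm x) a.length = a := by
  have hx : x ∈ fruit V (hV.equiv.symm x) := by
    simpa using hV.equiv_mem_fruit (hV.equiv.symm x)
  exact ⟨fun ha => hV.locallyStrict.restr_eq_of_mem_fruit ha hx,
    fun h => h ▸ fruit_subset V _ _ hx⟩

lemma mem_cut_iff {q : ℕ → ℕ} {n : ℕ} {x : X} :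
    x ∈ cut V q n ↔ hV.equiv.symm x ∈ rsequences q n := by
  rw [hV.cut_eq_image, mem_image_equiv]

end IsStrictScheme

lemma IsStrictScheme.cut_zero {X : Type*} {V : List ℕ → Set X} (hV : IsStrictScheme V)
    (q : ℕ → ℕ) : cut V q 0 = (⋃ k > q 0, V [k]) ∪ cut V q 1 := by
  ext x
  obtain ⟨p, rfl⟩ := hV.equiv.surjective x
  have hfirst (k : ℕ) : hV.equiv p ∈ V [k] ↔ p 0 = k := by simp [hV.mem_iff_restr_eq, restr]
  simp only [mem_union, mem_iUnion, hfirst, hV.mem_cut_iff, Equiv.symm_apply_apply, exists_prop,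
    exists_eq_right']
  change tri q p ∧ _ ↔ q 0 < p 0 ∨ tri q p ∧ _
  constructor
  · rintro ⟨⟨_ | k, hk, hlt⟩, -⟩
    · exact .inl hlt
    · exact .inr ⟨⟨k + 1, hk, hlt⟩,
        restr_eq_restr_iff.2 fun i hi => restr_eq_restr_iff.1 hk i (by omega)⟩
  · rintro (hlt | ⟨htri, -⟩)
    · exact ⟨⟨0, rfl, hlt⟩, rfl⟩
    · exact ⟨htri, rfl⟩

lemma IsStrictScheme.preimage {X Y : Type*} {U : List ℕ → Set Y} (hU : IsStrictScheme U)
    (e : X ≃ Y) : IsStrictScheme fun a => e ⁻¹' U a where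
  covering := ⟨by simp [hU.covering.1], fun a => by simp only [← preimage_iUnion, ← hU.covering.2]⟩
  locallyStrict := ⟨fun a => by simp only [← preimage_iUnion, ← hU.locallyStrict.1],
    fun a m k hmk => by rw [← preimage_inter, hU.locallyStrict.2 a m k hmk, preimage_empty]⟩
  strictBranches q := ⟨e.symm (hU.equiv q), by
    rw [fruit_preimage, hU.fruit_eq, ← e.image_symm_eq_preimage, image_singleton]⟩

section Topology

variable {X Y : Type*} [τ : TopologicalSpace X] [σ : TopologicalSpace Y]
  {V : List ℕ → Set X} {U : List ℕ → Set Y}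

lemma IsBaseBranch.preimage (h : X ≃ₜ Y) {q : ℕ → ℕ} {x : X} (hq : IsBaseBranch σ U q (h x)) :
    IsBaseBranch τ (fun a => h ⁻¹' U a) q x := by
  have hcut (m : ℕ) : cut (fun a => h ⁻¹' U a) q m ∪ {x} = h ⁻¹' (cut U q m ∪ {h x}) := by
    rw [preimage_union, cut_preimage, ← h.image_symm, image_singleton, h.symm_apply_apply]
  obtain ⟨hx, hopen, hbasis⟩ := hq
  refine ⟨by rwa [fruit_preimage], fun m => ?_, ?_⟩
  · rw [hcut]
    exact (hopen m).preimage h.continuous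
  · simpa only [hcut, ← h.nhds_eq_comap] using hbasis.comap h

namespace IsStrictSorgenfreyScheme

lemma preimage (hU : IsStrictSorgenfreyScheme σ U) (h : X ≃ₜ Y) :
    IsStrictSorgenfreyScheme τ fun a => h ⁻¹' U a where
  toIsStrictScheme := hU.toIsStrictScheme.preimage h.toEquiv
  isBaseBranch q x hx := (hU.isBaseBranch q (h x) (by rwa [fruit_preimage] at hx)).preimage h

lemma isOpen (hV : IsStrictSorgenfreyScheme τ V) (a : List ℕ) : IsOpen (V a) := by
  refine isOpen_iff_mem_nhds.2 fun x hx => ?_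
  obtain ⟨q, hq⟩ := hV.covering.exists_mem_fruit x
  refine mem_of_superset ((hV.isBaseBranch q x hq).2.2.mem_of_mem (i := a.length) trivial)
    (union_subset ?_ (singleton_subset_iff.2 hx))
  exact (cut_subset V q _).trans_eq (congrArg V (hV.locallyStrict.restr_eq_of_mem_fruit hx hq))

lemma nhds_hasBasis (hV : IsStrictSorgenfreyScheme τ V) (q : ℕ → ℕ) :
    (𝓝 (hV.equiv q)).HasBasis (fun _ : ℕ => True)
      fun m => hV.equiv '' insert q (rsequences q m) := by
  simpa only [hV.cut_union_singleton_eq_image] using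
    (hV.isBaseBranch q _ (hV.equiv_mem_fruit q)).2.2

lemma continuous_equiv_symm_trans (hV : IsStrictSorgenfreyScheme τ V)
    (hU : IsStrictSorgenfreyScheme σ U) : Continuous (hV.equiv.symm.trans hU.equiv) := by
  refine continuous_iff_continuousAt.2 fun x => ?_
  obtain ⟨q, rfl⟩ := hV.equiv.surjective x
  rw [ContinuousAt, Equiv.trans_apply, Equiv.symm_apply_apply]
  refine ((hV.nhds_hasBasis q).tendsto_iff (hU.nhds_hasBasis q)).2 fun m _ => ⟨m, trivial, ?_⟩
  rintro _ ⟨p, hp, rfl⟩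
  exact ⟨p, hp, by simp⟩

def homeomorph (hV : IsStrictSorgenfreyScheme τ V) (hU : IsStrictSorgenfreyScheme σ U) :
    X ≃ₜ Y where
  toEquiv := hV.equiv.symm.trans hU.equiv
  continuous_toFun := hV.continuous_equiv_symm_trans hU
  continuous_invFun := hU.continuous_equiv_symm_trans hV

end IsStrictSorgenfreyScheme

lemma isSorgenfreyBase_and_locallyStrict_and_strictBranches_iff :
    IsSorgenfreyBase τ V ∧ LocallyStrict V ∧ StrictBranches V ↔ IsStrictSorgenfreyScheme τ V := by
  constructor
  · rintro ⟨⟨-, -, hcov, hS1, -⟩, hls, hsb⟩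
    refine ⟨⟨hcov, hls, hsb⟩, fun q x hx => ?_⟩
    obtain ⟨t, ht, -⟩ := hS1 x q hx 0
    exact hls.eq_of_mem_fruit ht.1 hx ▸ ht
  · intro hV
    refine ⟨⟨hV.isOpen, fun q => ⟨_, hV.equiv_mem_fruit q⟩, hV.covering,
      fun x q hq n => ⟨q, hV.isBaseBranch q x hq, rfl⟩,
      fun q => ⟨_, hV.isBaseBranch q _ (hV.equiv_mem_fruit q)⟩⟩,
      hV.locallyStrict, hV.strictBranches⟩

end Topology

def pieceStart (k : ℕ) : ℝ := 1 - 2⁻¹ ^ k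

/-- A pair `I` stands for the interval `[I.1, I.2)`. -/
def piece (k : ℕ) (I : ℝ × ℝ) : ℝ × ℝ :=
  (I.1 + (I.2 - I.1) * pieceStart k, I.1 + (I.2 - I.1) * pieceStart (k + 1))

/-- The value at `[]` is never used: `intervalScheme [] = univ`. -/
def node : List ℕ → ℝ × ℝ
  | [] => (0, 1)
  | k :: a => a.foldl (fun I j => piece j I)
      ((Equiv.intEquivNat.symm k : ℝ), (Equiv.intEquivNat.symm k : ℝ) + 1)

def intervalScheme : List ℕ → Set ℝ
  | [] => univ
  | k :: a => Ico (node (k :: a)).1 (node (k :: a)).2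

lemma pieceStart_nonneg (k : ℕ) : 0 ≤ pieceStart k :=
  sub_nonneg.2 (pow_le_one₀ (by norm_num) (by norm_num))

lemma pieceStart_lt_one (k : ℕ) : pieceStart k < 1 :=
  sub_lt_self 1 (by positivity)

lemma pieceStart_monotone : Monotone pieceStart :=
  fun _ _ h => sub_le_sub_left (pow_le_pow_of_le_one (by norm_num) (by norm_num) h) 1

lemma piece_snd_sub_fst (k : ℕ) (I : ℝ × ℝ) :
    (piece k I).2 - (piece k I).1 = (I.2 - I.1) * 2⁻¹ ^ (k + 1) := by
  simp only [piece, pieceStart, pow_succ]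
  ring

lemma piece_snd_lt {I : ℝ × ℝ} (hI : I.1 < I.2) (k : ℕ) : (piece k I).2 < I.2 := by
  have := pieceStart_lt_one (k + 1)
  simp only [piece]
  nlinarith

lemma piece_snd_le_fst {I : ℝ × ℝ} (hI : I.1 ≤ I.2) {k m : ℕ} (hkm : k < m) :
    (piece k I).2 ≤ (piece m I).1 :=
  add_le_add_right (mul_le_mul_of_nonneg_left (pieceStart_monotone hkm) (sub_nonneg.2 hI)) _

lemma Ico_eq_iUnion_piece {I : ℝ × ℝ} (hI : I.1 < I.2) :
    Ico I.1 I.2 = ⋃ k, Ico (piece k I).1 (piece k I).2 := by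
  have hw : 0 < I.2 - I.1 := sub_pos.2 hI
  ext x
  simp only [mem_iUnion, mem_Ico, piece, pieceStart]
  constructor
  · rintro ⟨h1, h2⟩
    obtain ⟨k, hk1, hk2⟩ := exists_nat_pow_near_of_lt_one (x := (I.2 - x) / (I.2 - I.1))
      (div_pos (by linarith) hw) ((div_le_one hw).2 (by linarith)) (by norm_num : (0 : ℝ) < 2⁻¹)
      (by norm_num)
    rw [lt_div_iff₀ hw] at hk1
    rw [div_le_iff₀ hw] at hk2
    exact ⟨k, by nlinarith, by nlinarith⟩
  · rintro ⟨k, h1, h2⟩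
    have := pieceStart_nonneg k
    have := pieceStart_lt_one (k + 1)
    simp only [pieceStart] at *
    constructor <;> nlinarith

lemma Ico_piece_inter_Ico_piece {I : ℝ × ℝ} (hI : I.1 ≤ I.2) {k m : ℕ} (hkm : k ≠ m) :
    Ico (piece k I).1 (piece k I).2 ∩ Ico (piece m I).1 (piece m I).2 = ∅ := by
  refine eq_empty_of_forall_notMem fun x ⟨hk, hm⟩ => ?_
  rcases hkm.lt_or_gt with h | h
  · linarith [hk.2, hm.1, piece_snd_le_fst hI h]
  · linarith [hk.1, hm.2, piece_snd_le_fst hI h]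

lemma node_append {a : List ℕ} (ha : a ≠ []) (k : ℕ) : node (a ++ [k]) = piece k (node a) := by
  obtain ⟨j, a, rfl⟩ := List.exists_cons_of_ne_nil ha
  simp [node]

lemma node_fst_lt_snd {a : List ℕ} (ha : a ≠ []) : (node a).1 < (node a).2 := by
  induction a using List.reverseRec with
  | nil => exact absurd rfl ha
  | append_singleton a k ih =>
    rcases eq_or_ne a [] with rfl | ha'
    · simp [node]
    · rw [node_append ha']
      have := piece_snd_sub_fst k (node a)
      have := sub_pos.2 (ih ha')
      nlinarith [pow_pos (by norm_num : (0 : ℝ) < 2⁻¹) (k + 1)]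

lemma intervalScheme_of_ne_nil {a : List ℕ} (ha : a ≠ []) :
    intervalScheme a = Ico (node a).1 (node a).2 := by
  obtain ⟨j, a, rfl⟩ := List.exists_cons_of_ne_nil ha
  rfl

lemma mem_intervalScheme_singleton {k : ℕ} {x : ℝ} :
    x ∈ intervalScheme [k] ↔ ⌊x⌋ = Equiv.intEquivNat.symm k := by
  simp [intervalScheme, node, Int.floor_eq_iff]

lemma intervalScheme_eq_iUnion (a : List ℕ) :
    intervalScheme a = ⋃ k, intervalScheme (a ++ [k]) := by
  rcases eq_or_ne a [] with rfl | ha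
  · refine (eq_univ_of_forall fun x => mem_iUnion.2 ⟨Equiv.intEquivNat ⌊x⌋, ?_⟩).symm
    simp [mem_intervalScheme_singleton]
  · simp only [intervalScheme_of_ne_nil ha,
      intervalScheme_of_ne_nil (List.append_ne_nil_of_left_ne_nil ha _), node_append ha]
    exact Ico_eq_iUnion_piece (node_fst_lt_snd ha)

lemma locallyStrict_intervalScheme : LocallyStrict intervalScheme := by
  refine ⟨intervalScheme_eq_iUnion, fun a m k hmk => ?_⟩
  rcases eq_or_ne a [] with rfl | ha
  · refine eq_empty_of_forall_notMem fun x ⟨hm, hk⟩ => hmk ?_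
    rw [List.nil_append, mem_intervalScheme_singleton] at hm hk
    exact Equiv.intEquivNat.symm.injective (hm.symm.trans hk)
  · simp only [intervalScheme_of_ne_nil (List.append_ne_nil_of_left_ne_nil ha _), node_append ha]
    exact Ico_piece_inter_Ico_piece (node_fst_lt_snd ha).le hmk

lemma restr_succ_ne_nil (q : ℕ → ℕ) (n : ℕ) : restr q (n + 1) ≠ [] :=
  List.ne_nil_of_length_pos (by simp [restr_length])

lemma node_restr_add_two (q : ℕ → ℕ) (n : ℕ) :
    node (restr q (n + 2)) = piece (q (n + 1)) (node (restr q (n + 1))) := by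
  rw [restr_succ q (n + 1), node_append (restr_succ_ne_nil q n)]

lemma node_restr_snd_sub_fst_le (q : ℕ → ℕ) (n : ℕ) :
    (node (restr q (n + 1))).2 - (node (restr q (n + 1))).1 ≤ 2⁻¹ ^ n := by
  induction n with
  | zero => simp [restr, node]
  | succ n ih =>
    rw [node_restr_add_two, piece_snd_sub_fst, pow_succ _ n]
    exact mul_le_mul ih (pow_le_of_le_one (by norm_num) (by norm_num) (Nat.succ_ne_zero _))
      (by positivity) (by positivity)

def branchPoint (q : ℕ → ℕ) : ℝ := ⨆ n, (node (restr q (n + 1))).1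

lemma branchPoint_mem_Ico (q : ℕ → ℕ) (n : ℕ) :
    branchPoint q ∈ Ico (node (restr q (n + 1))).1 (node (restr q (n + 1))).2 := by
  have hlt (n : ℕ) := node_fst_lt_snd (restr_succ_ne_nil q n)
  have hstep (n : ℕ) := (Ico_subset_Ico_iff (hlt (n + 1))).1 <| by
    rw [node_restr_add_two, Ico_eq_iUnion_piece (hlt n)]
    exact subset_iUnion (fun k => Ico (piece k _).1 (piece k _).2) _
  have hmem := (monotone_nat_of_le_succ fun n => (hstep n).1).ciSup_mem_iInter_Icc_of_antitone
    (antitone_nat_of_succ_le fun n => (hstep n).2) fun n => (hlt n).le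
  refine ⟨(mem_iInter.1 hmem n).1, (mem_iInter.1 hmem (n + 1)).2.trans_lt ?_⟩
  rw [node_restr_add_two]
  exact piece_snd_lt (hlt n) _

lemma fruit_intervalScheme (q : ℕ → ℕ) : fruit intervalScheme q = {branchPoint q} := by
  refine eq_singleton_iff_unique_mem.2 ⟨mem_iInter.2 fun n => ?_, fun x hx => ?_⟩
  · cases n with
    | zero => exact mem_univ _
    | succ n => exact intervalScheme_of_ne_nil (restr_succ_ne_nil q n) ▸ branchPoint_mem_Ico q n
  · refine eq_of_forall_dist_le fun ε hε => ?_
    obtain ⟨n, hn⟩ := exists_pow_lt_of_lt_one hε (by norm_num : (2⁻¹ : ℝ) < 1)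
    have hx' := fruit_subset _ q (n + 1) hx
    rw [intervalScheme_of_ne_nil (restr_succ_ne_nil q n)] at hx'
    have hb := branchPoint_mem_Ico q n
    have hw := node_restr_snd_sub_fst_le q n
    rw [Real.dist_eq, abs_le]
    constructor <;> linarith [hx'.1, hx'.2, hb.1, hb.2]

lemma isStrictScheme_intervalScheme : IsStrictScheme intervalScheme where
  covering := ⟨rfl, intervalScheme_eq_iUnion⟩
  locallyStrict := locallyStrict_intervalScheme
  strictBranches q := ⟨_, fruit_intervalScheme q⟩

lemma coe_equiv_intervalScheme : ⇑isStrictScheme_intervalScheme.equiv = branchPoint :=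
  funext fun q => singleton_injective <|
    (isStrictScheme_intervalScheme.fruit_eq q).symm.trans (fruit_intervalScheme q)

lemma branchPoint_lt_of_tri {q p : ℕ → ℕ} (h0 : q 0 = p 0) (h : tri q p) :
    branchPoint q < branchPoint p := by
  obtain ⟨_ | n, hr, hlt⟩ := h
  · exact absurd h0 hlt.ne
  · calc branchPoint q < (node (restr q (n + 2))).2 := (branchPoint_mem_Ico q (n + 1)).2
      _ ≤ (node (restr p (n + 2))).1 := by
        rw [node_restr_add_two, node_restr_add_two, ← hr]
        exact piece_snd_le_fst (node_fst_lt_snd (restr_succ_ne_nil q n)).le hlt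
      _ ≤ branchPoint p := (branchPoint_mem_Ico p (n + 1)).1

lemma cut_intervalScheme_succ_union (q : ℕ → ℕ) (n : ℕ) :
    cut intervalScheme q (n + 1) ∪ {branchPoint q} =
      Ico (branchPoint q) (node (restr q (n + 1))).2 := by
  have hV := isStrictScheme_intervalScheme
  ext x
  obtain ⟨p, rfl⟩ := hV.equiv.surjective x
  rw [← coe_equiv_intervalScheme, hV.cut_union_singleton_eq_image,
    hV.equiv.injective.mem_set_image, coe_equiv_intervalScheme, mem_insert_iff]
  constructor
  · rintro (rfl | ⟨htri, hr⟩)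
    · exact ⟨le_rfl, (branchPoint_mem_Ico p n).2⟩
    · exact ⟨(branchPoint_lt_of_tri (restr_eq_restr_iff.1 hr 0 n.succ_pos) htri).le,
        hr ▸ (branchPoint_mem_Ico p n).2⟩
  · rintro ⟨hqp, hp⟩
    have hr : restr p (n + 1) = restr q (n + 1) := by
      have hmem : branchPoint p ∈ intervalScheme (restr q (n + 1)) := by
        rw [intervalScheme_of_ne_nil (restr_succ_ne_nil q n)]
        exact ⟨(branchPoint_mem_Ico q n).1.trans hqp, hp⟩
      simpa [restr_length] using
        locallyStrict_intervalScheme.restr_eq_of_mem_fruit hmem (fruit_intervalScheme p ▸ rfl)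
    rcases eq_or_ne p q with rfl | hne
    · exact .inl rfl
    · have h0 : p 0 = q 0 := restr_eq_restr_iff.1 hr 0 n.succ_pos
      rcases tri_or_tri_of_ne hne with h | h
      · exact absurd hqp (not_le.2 (branchPoint_lt_of_tri h0 h))
      · exact .inr ⟨h, hr.symm⟩

lemma isOpen_Ico_sorgenfrey (a b : ℝ) : IsOpen[sorgenfreyTop] (Ico a b) :=
  GenerateOpen.basic _ ⟨a, b, rfl⟩

lemma nhds_sorgenfrey_hasBasis (x : ℝ) :
    (@nhds ℝ sorgenfreyTop x).HasBasis (x < ·) (Ico x ·) := by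
  have hdir : DirectedOn (· ⊇ ·) {s | x ∈ s ∧ ∃ a b : ℝ, s = Ico a b} := by
    rintro _ ⟨hxu, a, b, rfl⟩ _ ⟨hxv, c, d, rfl⟩
    exact ⟨Ico (max a c) (min b d), ⟨⟨max_le hxu.1 hxv.1, lt_min hxu.2 hxv.2⟩, _, _, rfl⟩,
      Ico_subset_Ico (le_max_left a c) (min_le_left b d),
      Ico_subset_Ico (le_max_right a c) (min_le_right b d)⟩
  have hne : {s | x ∈ s ∧ ∃ a b : ℝ, s = Ico a b}.Nonempty :=
    ⟨Ico x (x + 1), ⟨le_rfl, by linarith⟩, _, _, rfl⟩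
  rw [sorgenfreyTop, nhds_generateFrom]
  refine (hasBasis_biInf_principal hdir hne).to_hasBasis ?_
    fun b hb => ⟨Ico x b, ⟨⟨le_rfl, hb⟩, _, _, rfl⟩, subset_rfl⟩
  rintro _ ⟨hx, a, b, rfl⟩
  exact ⟨b, hx.2, Ico_subset_Ico_left hx.1⟩

lemma isBaseBranch_intervalScheme (q : ℕ → ℕ) :
    IsBaseBranch sorgenfreyTop intervalScheme q (branchPoint q) := by
  let _ : TopologicalSpace ℝ := sorgenfreyTop
  have hopen (m : ℕ) : IsOpen (cut intervalScheme q m ∪ {branchPoint q}) := by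
    cases m with
    | zero =>
      rw [isStrictScheme_intervalScheme.cut_zero, union_assoc, cut_intervalScheme_succ_union]
      refine (isOpen_biUnion fun k _ => ?_).union (isOpen_Ico_sorgenfrey _ _)
      rw [intervalScheme_of_ne_nil (List.cons_ne_nil k [])]
      exact isOpen_Ico_sorgenfrey _ _
    | succ n =>
      rw [cut_intervalScheme_succ_union]
      exact isOpen_Ico_sorgenfrey _ _
  refine ⟨fruit_intervalScheme q ▸ rfl, hopen, (nhds_sorgenfrey_hasBasis _).to_hasBasis'
    (fun b hb => ?_) fun m _ => (hopen m).mem_nhds (.inr rfl)⟩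
  obtain ⟨n, hn⟩ := exists_pow_lt_of_lt_one (sub_pos.2 hb) (by norm_num : (2⁻¹ : ℝ) < 1)
  refine ⟨n + 1, trivial, ?_⟩
  rw [cut_intervalScheme_succ_union]
  exact Ico_subset_Ico_right
    (by linarith [node_restr_snd_sub_fst_le q n, (branchPoint_mem_Ico q n).1])

lemma isStrictSorgenfreyScheme_intervalScheme :
    IsStrictSorgenfreyScheme sorgenfreyTop intervalScheme where
  toIsStrictScheme := isStrictScheme_intervalScheme
  isBaseBranch q x hx := by
    rw [fruit_intervalScheme] at hx
    exact hx ▸ isBaseBranch_intervalScheme q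

theorem stmt8_general {X : Type*} (τ : TopologicalSpace X) :
    (∃ V : List ℕ → Set X, IsSorgenfreyBase τ V ∧ LocallyStrict V ∧ StrictBranches V) ↔
    Nonempty (@Homeomorph X ℝ τ sorgenfreyTop) := by
  simp only [isSorgenfreyBase_and_locallyStrict_and_strictBranches_iff (τ := τ)]
  constructor
  · rintro ⟨V, hV⟩
    exact ⟨hV.homeomorph (σ := sorgenfreyTop) isStrictSorgenfreyScheme_intervalScheme⟩
  · rintro ⟨h⟩
    exact ⟨_, isStrictSorgenfreyScheme_intervalScheme.preimage (σ := sorgenfreyTop) h⟩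

/-- A Hausdorff space has a locally strict Sorgenfrey base with strict branches
iff it is homeomorphic to the Sorgenfrey line; so the Sorgenfrey line is, up to
homeomorphism, the unique Hausdorff space with such a base. -/
theorem stmt8 {X : Type*} (τ : TopologicalSpace X) (hT2 : @T2Space X τ) :
    (∃ V : List ℕ → Set X, IsSorgenfreyBase τ V ∧ LocallyStrict V ∧ StrictBranches V) ↔
    Nonempty (@Homeomorph X ℝ τ sorgenfreyTop) :=
  stmt8_general τ
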